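/- arXiv:1302.0753 — 2 statements merged into one kernel-verified Lean document; each statement's English description precedes it below -/
import Mathlib

section
/- Differential LANSIT: Define the distribution P_B on branching nodes by P_B(j) = Q_j / E[w(L)]. Then for any real-valued node function f, (E[f(L)] - f(0)) / E[w(L)] = Σ_{j∈B} P_B(j) · E[f(S_j) - f(j)]. -/
/-- A finite rooted tree with data of type `α` at the leaves. -/
inductive PTree (α : Type) : Type where
  | leaf (a : α) : PTree α
  | node (n : ℕ) (children : Fin n → PTree α) : PTree α

namespace PTree

/-- Node probability `Q_j`: sum of the probabilities of the leaves below the node. -/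
def Q {α : Type} (pr : α → ℝ) : PTree α → ℝ
  | .leaf a => pr a
  | .node n c => ∑ k : Fin n, Q pr (c k)

/-- All leaf probabilities are positive and every branching node has at least one
successor (so all node probabilities `Q_j` are positive). -/
def pos {α : Type} (pr : α → ℝ) : PTree α → Prop
  | .leaf a => 0 < pr a
  | .node n c => 0 < n ∧ ∀ k : Fin n, pos pr (c k)

/-- Expected value `E[f(L)]` over the leaves; nodes are identified by their
address (list of child indices from the root). -/
def leafExp {α : Type} (pr : α → ℝ) (f : List ℕ → ℝ) : PTree α → List ℕ → ℝ
  | .leaf a, addr => pr a * f addr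
  | .node n c, addr => ∑ k : Fin n, leafExp pr f (c k) (addr ++ [k.val])

/-- `Σ_{j∈B} P_B(j) · E[f(S_j) - f(j)]` with `P_B(j) = Q_j / W`. -/
noncomputable def branchSumNorm {α : Type} (pr : α → ℝ) (W : ℝ) (f : List ℕ → ℝ) :
    PTree α → List ℕ → ℝ
  | .leaf _, _ => 0
  | .node n c, addr =>
      (Q pr (.node n c) / W) *
        (∑ k : Fin n, (Q pr (c k) / Q pr (.node n c)) * (f (addr ++ [k.val]) - f addr))
      + ∑ k : Fin n, branchSumNorm pr W f (c k) (addr ++ [k.val])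
  termination_by structural t _ => t

/- Each branching node `j` contributes `Q_j · E[f(S_j) - f(j)] = Σ_k Q_{jk} (f(jk) - f(j))`,
so summing over all branching nodes telescopes along every root-to-leaf path to
`E[f(L)] - Q_root · f(root)`; dividing by `W` gives the theorem. -/

section

variable {α : Type} (pr : α → ℝ)

lemma Q_pos : ∀ {t : PTree α}, pos pr t → 0 < Q pr t
  | .leaf _, h => h
  | .node _ _, ⟨hn, hc⟩ =>
    Finset.sum_pos (fun k _ => Q_pos (hc k))
      (Finset.univ_nonempty_iff.mpr (Fin.pos_iff_nonempty.mp hn))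

lemma Q_node_mul_weighted_sum {n : ℕ} (c : Fin n → PTree α) (h : Q pr (.node n c) ≠ 0)
    (d : Fin n → ℝ) :
    Q pr (.node n c) * ∑ k, Q pr (c k) / Q pr (.node n c) * d k = ∑ k, Q pr (c k) * d k := by
  rw [Finset.mul_sum]
  exact Finset.sum_congr rfl fun k _ => by field_simp

theorem branchSumNorm_eq (W : ℝ) (f : List ℕ → ℝ) :
    ∀ {t : PTree α}, pos pr t → ∀ addr,
      branchSumNorm pr W f t addr = (leafExp pr f t addr - Q pr t * f addr) / W
  | .leaf a, _, addr => by simp [branchSumNorm, leafExp, Q]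
  | .node n c, h, addr => by
    have hchildren : ∑ k : Fin n, branchSumNorm pr W f (c k) (addr ++ [k.val])
        = ∑ k : Fin n, (leafExp pr f (c k) (addr ++ [k.val])
            - Q pr (c k) * f (addr ++ [k.val])) / W :=
      Finset.sum_congr rfl fun k _ => branchSumNorm_eq W f (h.2 k) _
    have hbranch : Q pr (.node n c) / W
          * ∑ k : Fin n, Q pr (c k) / Q pr (.node n c) * (f (addr ++ [k.val]) - f addr)
        = (∑ k : Fin n, Q pr (c k) * (f (addr ++ [k.val]) - f addr)) / W := by
      rw [div_mul_eq_mul_div, Q_node_mul_weighted_sum pr c (Q_pos pr h).ne']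
    rw [branchSumNorm.eq_2, hbranch, hchildren, ← Finset.sum_div, ← add_div,
      leafExp, Q, Finset.sum_mul, ← Finset.sum_add_distrib, ← Finset.sum_sub_distrib]
    congr 1
    exact Finset.sum_congr rfl fun k _ => by ring

end

theorem differential_lansit_general {α : Type} (pr : α → ℝ) (t : PTree α)
    (hpos : pos pr t) (hQ : Q pr t = 1)
    (f : List ℕ → ℝ) :
    (leafExp pr f t [] - f []) / leafExp pr (fun addr => (addr.length : ℝ)) t []
      = branchSumNorm pr (leafExp pr (fun addr => (addr.length : ℝ)) t []) f t [] := by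
  rw [branchSumNorm_eq pr _ f hpos, hQ, one_mul]

/-- Differential LANSIT: `(E[f(L)] - f(0)) / E[w(L)] = Σ_{j∈B} P_B(j) · E[f(S_j) - f(j)]`
with `P_B(j) = Q_j / E[w(L)]`. -/
theorem differential_lansit {α : Type} (pr : α → ℝ) (t : PTree α)
    (hpos : pos pr t) (hQ : Q pr t = 1)
    (hW : 0 < leafExp pr (fun addr => (addr.length : ℝ)) t [])
    (f : List ℕ → ℝ) :
    (leafExp pr f t [] - f []) / leafExp pr (fun addr => (addr.length : ℝ)) t []
      = branchSumNorm pr (leafExp pr (fun addr => (addr.length : ℝ)) t []) f t [] :=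
  differential_lansit_general pr t hpos hQ f

end PTree
end

section
/- Convergence of entropy rate under vanishing normalized divergence (fixed-length case): Let P* be a distribution with full support on a finite alphabet X, and for each n let P_{X^n} be a distribution on X^n. If D(P_{X^n} ‖ (P*)^n)/n → 0 as n → ∞, then H(P_{X^n})/n → H(P*). -/
open Finset Filter

/-- Entropy (in bits) of a distribution on a finite alphabet, with `0 log 0 = 0`. -/
noncomputable def Hent {X : Type*} [Fintype X] (P : X → ℝ) : ℝ :=
  -∑ a, P a * Real.logb 2 (P a)

/-- Informational divergence (in bits), with `0 log(0/q) = 0`. -/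
noncomputable def Dkl {X : Type*} [Fintype X] (P Q : X → ℝ) : ℝ :=
  ∑ a, P a * Real.logb 2 (P a / Q a)

/-- A probability distribution on a finite alphabet. -/
def IsDist {X : Type*} [Fintype X] (P : X → ℝ) : Prop := (∀ a, 0 ≤ P a) ∧ ∑ a, P a = 1

/-! Change of measure (Donsker–Varadhan): for every `f`,
`E_P f ≤ ln 2 · D(P‖Q) + log E_Q e^f`, which is Gibbs' inequality against the tilted
distribution `Q e^f / Z`. Take `Q = (P*)ⁿ` and `f x = t · ∑ₖ g (x k)`, where
`g = -log₂ P* - H(P*)` is the centred surprisal. Then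
`E_{Pₙ} f = t (D(Pₙ‖(P*)ⁿ) + H(Pₙ) - n H(P*))`, while the log-moment generating function of the
i.i.d. sum is `n log E_{P*} e^{t g} ≤ n t² E_{P*} g²` for small `|t|`. Dividing by `n`, the
excess `eₙ = D/n + H(Pₙ)/n - H(P*)` satisfies `t eₙ ≤ ln 2 · D/n + K t²` for all small `t` of
both signs, which forces `eₙ → 0`. -/

open Real

section Finite

variable {X : Type*} [Fintype X]

theorem sum_mul_log_div_nonneg {P Q : X → ℝ} (hP : ∀ a, 0 ≤ P a) (hQ : ∀ a, 0 < Q a)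
    (hsum : ∑ a, Q a ≤ ∑ a, P a) : 0 ≤ ∑ a, P a * log (P a / Q a) := by
  have hterm : ∀ a, P a - Q a ≤ P a * log (P a / Q a) := by
    intro a
    rcases (hP a).eq_or_lt with hPa | hPa
    · simp [← hPa, (hQ a).le]
    · have h := one_sub_inv_le_log_of_pos (div_pos hPa (hQ a))
      rw [inv_div] at h
      calc P a - Q a = P a * (1 - Q a / P a) := by field_simp
        _ ≤ P a * log (P a / Q a) := mul_le_mul_of_nonneg_left h hPa.le
  have := Finset.sum_le_sum fun a (_ : a ∈ univ) => hterm a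
  rw [Finset.sum_sub_distrib] at this
  linarith

theorem sum_mul_le_sum_mul_log_div_add_log_sum_mul_exp {P Q : X → ℝ} (hP : IsDist P)
    (hQ : ∀ a, 0 < Q a) (f : X → ℝ) :
    ∑ a, P a * f a ≤ ∑ a, P a * log (P a / Q a) + log (∑ a, Q a * exp (f a)) := by
  obtain ⟨hP0, hP1⟩ := hP
  have : Nonempty X := by
    by_contra h
    rw [not_nonempty_iff] at h
    simp at hP1
  set Z := ∑ a, Q a * exp (f a)
  have hZ : 0 < Z := Finset.sum_pos (fun a _ => mul_pos (hQ a) (exp_pos _)) univ_nonempty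
  have hgibbs := sum_mul_log_div_nonneg hP0 (Q := fun a => Q a * exp (f a) / Z)
    (fun a => div_pos (mul_pos (hQ a) (exp_pos _)) hZ)
    (by rw [← Finset.sum_div, div_self hZ.ne', hP1])
  have htilt : ∀ a, P a * log (P a / (Q a * exp (f a) / Z))
      = P a * log (P a / Q a) - P a * f a + P a * log Z := by
    intro a
    rcases eq_or_ne (P a) 0 with hPa | hPa
    · simp [hPa]
    · rw [div_div_eq_mul_div, mul_div_mul_comm, log_mul (div_ne_zero hPa (hQ a).ne')
        (div_ne_zero hZ.ne' (exp_pos _).ne'), log_div hZ.ne' (exp_pos _).ne', log_exp]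
      ring
  simp only [htilt, Finset.sum_add_distrib, Finset.sum_sub_distrib, ← Finset.sum_mul,
    hP1, one_mul] at hgibbs
  linarith

theorem log_sum_mul_exp_le {Q g : X → ℝ} (hQ : IsDist Q) (hmean : ∑ a, Q a * g a = 0)
    {t : ℝ} (ht : ∀ a, |t * g a| ≤ 1) :
    log (∑ a, Q a * exp (t * g a)) ≤ t ^ 2 * ∑ a, Q a * g a ^ 2 := by
  obtain ⟨hQ0, hQ1⟩ := hQ
  have hpos : 0 < ∑ a, Q a * exp (t * g a) := by
    have : ∑ a, Q a * exp (t * g a) ≥ ∑ a, Q a * (t * g a + 1) :=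
      Finset.sum_le_sum fun a _ => mul_le_mul_of_nonneg_left (add_one_le_exp _) (hQ0 a)
    simp only [mul_add, mul_one, Finset.sum_add_distrib, mul_left_comm _ t,
      ← Finset.mul_sum, hmean, hQ1] at this
    linarith
  calc log (∑ a, Q a * exp (t * g a))
      ≤ ∑ a, Q a * exp (t * g a) - 1 := log_le_sub_one_of_pos hpos
    _ = ∑ a, Q a * (exp (t * g a) - 1 - t * g a) := by
      simp only [mul_sub, Finset.sum_sub_distrib, mul_one, hQ1, mul_left_comm _ t,
        ← Finset.mul_sum, hmean]
      ring
    _ ≤ ∑ a, Q a * (t * g a) ^ 2 := Finset.sum_le_sum fun a _ =>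
      mul_le_mul_of_nonneg_left ((le_abs_self _).trans (abs_exp_sub_one_sub_id_le (ht a)))
        (hQ0 a)
    _ = t ^ 2 * ∑ a, Q a * g a ^ 2 := by
      rw [Finset.mul_sum]
      exact Finset.sum_congr rfl fun a _ => by ring

theorem Dkl_add_Hent {P Q : X → ℝ} (hQ : ∀ a, 0 < Q a) :
    Dkl P Q + Hent P = -∑ a, P a * logb 2 (Q a) := by
  have hterm : ∀ a, P a * logb 2 (P a / Q a) = P a * logb 2 (P a) - P a * logb 2 (Q a) := by
    intro a
    rcases eq_or_ne (P a) 0 with hPa | hPa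
    · simp [hPa]
    · rw [logb_div hPa (hQ a).ne', mul_sub]
  simp only [Dkl, Hent, hterm, Finset.sum_sub_distrib]
  ring

theorem sum_mul_log_div_eq_log_two_mul_Dkl (P Q : X → ℝ) :
    ∑ a, P a * log (P a / Q a) = log 2 * Dkl P Q := by
  rw [Dkl, Finset.mul_sum]
  refine Finset.sum_congr rfl fun a _ => ?_
  rw [logb]
  field_simp

theorem abs_mul_le_one_of_abs_le_inv {g : X → ℝ} {t : ℝ}
    (ht : |t| ≤ (1 + ∑ a, |g a|)⁻¹) (a : X) : |t * g a| ≤ 1 := by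
  have hpos : 0 < 1 + ∑ a, |g a| := by positivity
  have hga : |g a| ≤ 1 + ∑ a, |g a| :=
    (Finset.single_le_sum (fun b _ => abs_nonneg (g b)) (mem_univ a)).trans (by linarith)
  calc |t * g a| = |t| * |g a| := abs_mul t (g a)
    _ ≤ (1 + ∑ a, |g a|)⁻¹ * (1 + ∑ a, |g a|) :=
      mul_le_mul ht hga (abs_nonneg _) (inv_nonneg.2 hpos.le)
    _ = 1 := inv_mul_cancel₀ hpos.ne'

noncomputable def centeredSurprisal (P : X → ℝ) (a : X) : ℝ := -logb 2 (P a) - Hent P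

theorem sum_mul_centeredSurprisal {P : X → ℝ} (hP : IsDist P) :
    ∑ a, P a * centeredSurprisal P a = 0 := by
  simp only [centeredSurprisal, mul_sub, Finset.sum_sub_distrib, ← Finset.sum_mul, hP.2,
    mul_neg, Finset.sum_neg_distrib, Hent]
  ring

theorem sum_prod_mul_exp_sum (P g : X → ℝ) (t : ℝ) (n : ℕ) :
    ∑ x : Fin n → X, (∏ k, P (x k)) * exp (t * ∑ k, g (x k))
      = (∑ a, P a * exp (t * g a)) ^ n := by
  rw [Fintype.sum_pow]
  refine Finset.sum_congr rfl fun x _ => ?_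
  rw [Finset.mul_sum, exp_sum, ← Finset.prod_mul_distrib]

theorem sum_mul_sum_centeredSurprisal {n : ℕ} {Pstar : X → ℝ} (hfull : ∀ a, 0 < Pstar a)
    {Pn : (Fin n → X) → ℝ} (hPn : ∑ x, Pn x = 1) :
    ∑ x, Pn x * ∑ k, centeredSurprisal Pstar (x k)
      = Dkl Pn (fun x => ∏ k, Pstar (x k)) + Hent Pn - n * Hent Pstar := by
  have hQ : ∀ x : Fin n → X, 0 < ∏ k, Pstar (x k) := fun x => prod_pos fun k _ => hfull _
  have hsurprisal : ∀ x : Fin n → X, ∑ k, centeredSurprisal Pstar (x k)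
      = -logb 2 (∏ k, Pstar (x k)) - n * Hent Pstar := by
    intro x
    simp [centeredSurprisal, logb_prod _ _ fun k _ => (hfull (x k)).ne']
  simp only [hsurprisal, mul_sub, Finset.sum_sub_distrib, ← Finset.sum_mul, hPn, mul_neg,
    Finset.sum_neg_distrib, ← Dkl_add_Hent hQ]
  ring

theorem mul_Dkl_add_Hent_sub_le {n : ℕ} (hn : 0 < n) {Pstar : X → ℝ} (hPstar : IsDist Pstar)
    (hfull : ∀ a, 0 < Pstar a) {Pn : (Fin n → X) → ℝ} (hPn : IsDist Pn) {t : ℝ}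
    (ht : ∀ a, |t * centeredSurprisal Pstar a| ≤ 1) :
    t * (Dkl Pn (fun x => ∏ k, Pstar (x k)) / n + Hent Pn / n - Hent Pstar)
      ≤ log 2 * (Dkl Pn (fun x => ∏ k, Pstar (x k)) / n)
        + (∑ a, Pstar a * centeredSurprisal Pstar a ^ 2) * t ^ 2 := by
  set Q : (Fin n → X) → ℝ := fun x => ∏ k, Pstar (x k)
  set K := ∑ a, Pstar a * centeredSurprisal Pstar a ^ 2
  have hchange := sum_mul_le_sum_mul_log_div_add_log_sum_mul_exp hPn
    (Q := Q) (fun x => prod_pos fun k _ => hfull (x k))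
    (fun x => t * ∑ k, centeredSurprisal Pstar (x k))
  rw [sum_prod_mul_exp_sum, log_pow, sum_mul_log_div_eq_log_two_mul_Dkl] at hchange
  simp only [mul_left_comm _ t, ← Finset.mul_sum,
    sum_mul_sum_centeredSurprisal hfull hPn.2] at hchange
  have hmgf := log_sum_mul_exp_le hPstar (sum_mul_centeredSurprisal hPstar) ht
  have hn' : (0 : ℝ) < n := Nat.cast_pos.2 hn
  have hexcess :
      t * (Dkl Pn Q + Hent Pn - n * Hent Pstar) ≤ log 2 * Dkl Pn Q + n * (t ^ 2 * K) :=
    hchange.trans (by gcongr)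
  calc t * (Dkl Pn Q / n + Hent Pn / n - Hent Pstar)
      = t * (Dkl Pn Q + Hent Pn - n * Hent Pstar) / n := by field_simp
    _ ≤ (log 2 * Dkl Pn Q + n * (t ^ 2 * K)) / n := by gcongr
    _ = log 2 * (Dkl Pn Q / n) + K * t ^ 2 := by field_simp

end Finite

theorem tendsto_zero_of_forall_mul_le {ι : Type*} {l : Filter ι} {e c : ι → ℝ} {K t₀ : ℝ}
    (hK : 0 ≤ K) (ht₀ : 0 < t₀) (hc : Tendsto c l (nhds 0))
    (h : ∀ᶠ i in l, ∀ t, |t| ≤ t₀ → t * e i ≤ c i + K * t ^ 2) : Tendsto e l (nhds 0) := by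
  rw [Metric.tendsto_nhds]
  intro η hη
  set t := min t₀ (η / (2 * (K + 1)))
  have ht : 0 < t := lt_min ht₀ (by positivity)
  have hKt : K * t ≤ η / 2 := by
    have : t ≤ η / (2 * (K + 1)) := min_le_right _ _
    rw [le_div_iff₀ (by positivity)] at this
    nlinarith
  filter_upwards [h, hc.eventually (Iio_mem_nhds (by positivity : 0 < t * η / 2))]
    with i hi hci
  have hup := hi t (by rw [abs_of_pos ht]; exact min_le_left _ _)
  have hlow := hi (-t) (by rw [abs_neg, abs_of_pos ht]; exact min_le_left _ _)
  rw [Real.dist_eq, sub_zero, abs_lt]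
  have hci' : c i < t * η / 2 := hci
  constructor <;> nlinarith

/-- Convergence of the entropy rate: if the normalized divergence to the i.i.d.
product distribution vanishes, then the entropy rate converges to `H(P*)`. -/
theorem entropy_rate_convergence {X : Type} [Fintype X]
    (Pstar : X → ℝ) (hPstar : IsDist Pstar) (hfull : ∀ a, 0 < Pstar a)
    (P : (n : ℕ) → (Fin n → X) → ℝ) (hP : ∀ n, IsDist (P n))
    (hdiv : Tendsto
      (fun n : ℕ => Dkl (P n) (fun x : Fin n → X => ∏ k, Pstar (x k)) / n)
      atTop (nhds 0)) :
    Tendsto (fun n : ℕ => Hent (P n) / n) atTop (nhds (Hent Pstar)) := by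
  set g := centeredSurprisal Pstar
  have hexcess : Tendsto
      (fun n : ℕ => Dkl (P n) (fun x : Fin n → X => ∏ k, Pstar (x k)) / n
        + Hent (P n) / n - Hent Pstar) atTop (nhds 0) := by
    refine tendsto_zero_of_forall_mul_le (K := ∑ a, Pstar a * g a ^ 2)
      (sum_nonneg fun a _ => mul_nonneg (hPstar.1 a) (sq_nonneg _))
      (by positivity : 0 < (1 + ∑ a, |g a|)⁻¹) (by simpa using hdiv.const_mul (log 2)) ?_
    filter_upwards [eventually_gt_atTop 0] with n hn t ht
    exact mul_Dkl_add_Hent_sub_le hn hPstar hfull (hP n) (abs_mul_le_one_of_abs_le_inv ht)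
  convert (hexcess.sub hdiv).add_const (Hent Pstar) using 1
  · ext n
    ring
  · simp
end
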